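/- arXiv:1907.05002 — 7 statements merged into one kernel-verified Lean document; each statement's English description precedes it below -/
import Mathlib

section
/- Let Γ be a finite group with a fixed generating tuple γ₁,…,γ_d, acting by automorphisms on a finite group G with gcd(|G|,|Γ|) = 1, and let N be a Γ-stable normal subgroup with quotient H = G/N (with induced Γ-action). Let π : G^d → H^d be the coordinatewise quotient map. Then the elements of Y(G) are equidistributed over Y(H): for every x ∈ Y(H), the number of y ∈ Y(G) with π(y) = x is equal to |Y(G) ∩ N^d|, independently of x. -/
/-- Equidistribution of `Y(G)` over `Y(H)`: for a finite Γ-group `G` with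
`gcd(|G|,|Γ|)=1`, a generating tuple `γ₁,…,γ_d` of `Γ`, and a Γ-stable normal
subgroup `N` with quotient `H = G ⧸ N`, for every `x ∈ Y(H)` the number of
`y ∈ Y(G)` with coordinatewise image `x` equals `|Y(G) ∩ N^d|`. -/
theorem stmt_3 {G Γ : Type*} [Group G] [Group Γ] [Finite G] [Finite Γ]
    (φ : Γ →* MulAut G)
    (hco : Nat.Coprime (Nat.card G) (Nat.card Γ))
    {d : ℕ} (γ : Fin d → Γ) (hgen : Subgroup.closure (Set.range γ) = ⊤)
    (N : Subgroup G) [N.Normal]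
    (hN : ∀ σ : Γ, ∀ n ∈ N, φ σ n ∈ N) :
    let Y : G → (Fin d → G) := fun g i => g⁻¹ * φ (γ i) g
    -- the coordinatewise quotient map `π : G^d → H^d`
    let π : (Fin d → G) → (Fin d → G ⧸ N) := fun y i => (QuotientGroup.mk (y i) : G ⧸ N)
    -- `Y` computed in the quotient `H = G ⧸ N` with the induced Γ-action
    let YH : G → (Fin d → G ⧸ N) := fun g i => (QuotientGroup.mk (g⁻¹ * φ (γ i) g) : G ⧸ N)
    ∀ x : Fin d → G ⧸ N, x ∈ Set.range YH →
      Nat.card {y : Fin d → G // y ∈ Set.range Y ∧ π y = x} =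
        Nat.card {y : Fin d → G // y ∈ Set.range Y ∧ ∀ i, y i ∈ N} := by
  intro Y π YH x hx
  obtain ⟨g₁, rfl⟩ := hx
  classical
  -- the subgroup of elements fixed by all the generators
  let K : Subgroup G :=
    { carrier := {k | ∀ i, φ (γ i) k = k}
      one_mem' := fun i => map_one _
      mul_mem' := fun {a b} ha hb i => by rw [map_mul, ha i, hb i]
      inv_mem' := fun {a} ha i => by rw [map_inv, ha i] }
  -- fibers of Y are left cosets of K
  have hY : ∀ g g' : G, Y g = Y g' ↔ g' * g⁻¹ ∈ K := by
    intro g g'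
    rw [funext_iff]
    constructor
    · intro h i
      have h' := h i
      simp only [Y] at h'
      show φ (γ i) (g' * g⁻¹) = g' * g⁻¹
      rw [map_mul, map_inv]
      have := congrArg (fun z => g' * z * (φ (γ i) g)⁻¹) h'
      simp only [mul_assoc, mul_inv_cancel_left, mul_inv_cancel, mul_one] at this
      exact this.symm
    · intro h i
      have h' : φ (γ i) (g' * g⁻¹) = g' * g⁻¹ := h i
      rw [map_mul, map_inv] at h'
      show g⁻¹ * φ (γ i) g = g'⁻¹ * φ (γ i) g'
      have := congrArg (fun z => g'⁻¹ * z * (φ (γ i) g)) h'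
      simp only [mul_assoc, inv_mul_cancel_left, inv_mul_cancel, one_mul] at this
      simpa using this.symm
  -- translation between fibers of YH over points of its range
  have htrans : ∀ a b g : G, YH g = YH a → YH (g * a⁻¹ * b) = YH b := by
    intro a b g h
    funext i
    have h' := congrFun h i
    simp only [YH] at h' ⊢
    rw [QuotientGroup.eq] at h' ⊢
    set n := (g⁻¹ * φ (γ i) g)⁻¹ * (a⁻¹ * φ (γ i) a) with hn
    have key : ((g * a⁻¹ * b)⁻¹ * φ (γ i) (g * a⁻¹ * b))⁻¹ * (b⁻¹ * φ (γ i) b) =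
        ((φ (γ i) a)⁻¹ * φ (γ i) b)⁻¹ * n * ((φ (γ i) a)⁻¹ * φ (γ i) b) := by
      rw [hn]
      simp only [map_mul, map_inv]
      group
    rw [key]
    have := (‹N.Normal›).conj_mem n h' ((φ (γ i) a)⁻¹ * φ (γ i) b)⁻¹
    simpa using this
  -- counting fibers of YH via fibers of π over range points
  have hcard : ∀ x0 : Fin d → G ⧸ N,
      Nat.card {g : G // YH g = x0} =
        Nat.card {y : Fin d → G // y ∈ Set.range Y ∧ π y = x0} * Nat.card K := by
    intro x0
    rw [← Nat.card_prod]
    apply Nat.card_congr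
    -- choose a lift for each element of the fiber of π
    let F := {y : Fin d → G // y ∈ Set.range Y ∧ π y = x0}
    let s : F → G := fun y => y.2.1.choose
    have hs : ∀ y : F, Y (s y) = y.1 := fun y => y.2.1.choose_spec
    have hπY : ∀ g : G, π (Y g) = YH g := fun g => rfl
    have hYk : ∀ (y : F) (k : K), Y (k.1 * s y) = y.1 := by
      intro y k
      have hm : (k.1 * s y) * (s y)⁻¹ ∈ K := by simpa using k.2
      rw [← ((hY (s y) (k.1 * s y)).mpr hm), hs y]
    have hmem : ∀ (y : F) (k : K), π (Y (k.1 * s y)) = x0 := by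
      intro y k
      rw [hYk y k]
      exact y.2.2
    refine
      { toFun := fun g =>
          (⟨Y g.1, ⟨g.1, rfl⟩, by rw [hπY]; exact g.2⟩,
            ⟨g.1 * (s ⟨Y g.1, ⟨g.1, rfl⟩, by rw [hπY]; exact g.2⟩)⁻¹, ?_⟩)
        invFun := fun yk => ⟨yk.2.1 * s yk.1, hmem yk.1 yk.2⟩
        left_inv := ?_
        right_inv := ?_ }
    · -- membership in K
      set y : F := ⟨Y g.1, ⟨g.1, rfl⟩, by rw [hπY]; exact g.2⟩ with hy
      have : Y (s y) = Y g.1 := hs y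
      exact (hY (s y) g.1).mp this
    · intro g
      apply Subtype.ext
      simp
    · rintro ⟨y, k⟩
      have hyeq : (⟨Y (k.1 * s y), ⟨k.1 * s y, rfl⟩, by rw [hπY]; exact hmem y k⟩ : F) = y :=
        Subtype.ext (hYk y k)
      refine Prod.ext hyeq ?_
      apply Subtype.ext
      show k.1 * s y * (s _)⁻¹ = k.1
      rw [hyeq]
      simp
  -- rewrite the RHS as a fiber over YH 1
  have hone : ∀ y : Fin d → G, ((∀ i, y i ∈ N) ↔ π y = YH 1) := by
    intro y
    simp only [π, YH, funext_iff]
    constructor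
    · intro h i
      rw [QuotientGroup.eq]
      simpa using N.mul_mem (N.inv_mem (h i)) (N.one_mem)
    · intro h i
      have := h i
      rw [QuotientGroup.eq] at this
      simpa using this
  have hRHS : Nat.card {y : Fin d → G // y ∈ Set.range Y ∧ ∀ i, y i ∈ N} =
      Nat.card {y : Fin d → G // y ∈ Set.range Y ∧ π y = YH 1} := by
    apply Nat.card_congr
    exact Equiv.subtypeEquivRight fun y => and_congr_right fun _ => hone y
  rw [hRHS]
  -- the two YH-fibers are in bijection by translation
  have hfib : Nat.card {g : G // YH g = YH g₁} = Nat.card {g : G // YH g = YH 1} := by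
    apply Nat.card_congr
    refine
      { toFun := fun g => ⟨g.1 * g₁⁻¹ * 1, htrans g₁ 1 g.1 g.2⟩
        invFun := fun g => ⟨g.1 * 1⁻¹ * g₁, htrans 1 g₁ g.1 g.2⟩
        left_inv := fun g => by apply Subtype.ext; simp
        right_inv := fun g => by apply Subtype.ext; simp }
  have h1 := hcard (YH g₁)
  have h2 := hcard (YH 1)
  rw [hfib, h2] at h1
  have hKpos : 0 < Nat.card K := Nat.card_pos
  exact Nat.eq_of_mul_eq_mul_right hKpos h1.symm
end

section
/- Let Γ be a finite group with a fixed generating tuple γ₁,…,γ_d, and let G be a finite admissible Γ-group. Then G is Γ-generated by the coordinates of the elements of Y(G): the smallest Γ-stable subgroup of G containing the set {g⁻¹γᵢ(g) : g ∈ G, 1 ≤ i ≤ d} is G itself. -/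
/-- Let `Γ` be a finite group with fixed generating tuple `γ₁,…,γ_d` and `G` a
finite admissible Γ-group (i.e. `gcd(|G|,|Γ|)=1` and `G` is generated by the
elements `g⁻¹σ(g)`).  Then the smallest Γ-stable subgroup of `G` containing the
set `{g⁻¹γᵢ(g) : g ∈ G, 1 ≤ i ≤ d}` is `G` itself. -/
theorem stmt_6 {G Γ : Type*} [Group G] [Group Γ] [Finite G] [Finite Γ]
    (φ : Γ →* MulAut G)
    {d : ℕ} (γ : Fin d → Γ) (hgen : Subgroup.closure (Set.range γ) = ⊤)
    (hco : Nat.Coprime (Nat.card G) (Nat.card Γ))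
    (hadm : Subgroup.closure {x : G | ∃ (g : G) (σ : Γ), x = g⁻¹ * φ σ g} = ⊤) :
    ∀ K : Subgroup G, (∀ σ : Γ, ∀ x ∈ K, φ σ x ∈ K) →
      {x : G | ∃ (g : G) (i : Fin d), x = g⁻¹ * φ (γ i) g} ⊆ K → K = ⊤ := by
  intro K hK hsub
  set S : Subgroup Γ :=
    { carrier := {σ | ∀ g : G, g⁻¹ * φ σ g ∈ K}
      one_mem' := by intro g; simpa using K.one_mem
      mul_mem' := by
        intro a b ha hb g
        have h : g⁻¹ * φ (a * b) g = (g⁻¹ * φ a g) * φ a (g⁻¹ * φ b g) := by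
          simp [map_mul, mul_assoc]
        rw [h]
        exact K.mul_mem (ha g) (hK a _ (hb g))
      inv_mem' := by
        intro a ha g
        have h := K.inv_mem (ha (φ a⁻¹ g))
        have heq : ((φ a⁻¹ g)⁻¹ * φ a (φ a⁻¹ g))⁻¹ = g⁻¹ * φ a⁻¹ g := by
          simp [mul_inv_rev]
        rwa [heq] at h } with hSdef
  have hS : ∀ σ : Γ, ∀ g : G, g⁻¹ * φ σ g ∈ K := by
    have hle : (⊤ : Subgroup Γ) ≤ S := by
      rw [← hgen]
      refine (Subgroup.closure_le _).mpr ?_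
      rintro _ ⟨i, rfl⟩ g
      exact hsub ⟨g, i, rfl⟩
    exact fun σ g => hle (Subgroup.mem_top σ) g
  have hle : Subgroup.closure {x : G | ∃ (g : G) (σ : Γ), x = g⁻¹ * φ σ g} ≤ K := by
    refine (Subgroup.closure_le _).mpr ?_
    rintro _ ⟨g, σ, rfl⟩
    exact hS σ g
  rw [hadm] at hle
  exact top_le_iff.mp hle
end

section
/- Let Γ be a finite group, let G̃ be a finite admissible Γ-group, and let N be a Γ-stable normal subgroup of G̃ on which Γ acts trivially (σ(n) = n for all σ ∈ Γ and n ∈ N). Then G̃ acts trivially on N by conjugation: g·n·g⁻¹ = n for all g ∈ G̃ and n ∈ N. -/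
/-- Let `Γ` be a finite group, `G̃` a finite admissible Γ-group (i.e.
`gcd(|G̃|,|Γ|)=1` and `G̃` is generated by the elements `g⁻¹σ(g)`), and `N` a
Γ-stable normal subgroup of `G̃` on which `Γ` acts trivially.  Then `G̃` acts
trivially on `N` by conjugation. -/
theorem stmt_7 {G Γ : Type*} [Group G] [Group Γ] [Finite G] [Finite Γ]
    (φ : Γ →* MulAut G)
    (hco : Nat.Coprime (Nat.card G) (Nat.card Γ))
    (hadm : Subgroup.closure {x : G | ∃ (g : G) (σ : Γ), x = g⁻¹ * φ σ g} = ⊤)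
    (N : Subgroup G) [N.Normal]
    (htriv : ∀ σ : Γ, ∀ n ∈ N, φ σ n = n) :
    ∀ g : G, ∀ n ∈ N, g * n * g⁻¹ = n := by
  have hsub : Subgroup.closure {x : G | ∃ (g : G) (σ : Γ), x = g⁻¹ * φ σ g}
      ≤ Subgroup.centralizer (N : Set G) := by
    rw [Subgroup.closure_le]
    rintro x ⟨g, σ, rfl⟩
    simp only [SetLike.mem_coe]
    rw [Subgroup.mem_centralizer_iff]
    intro n hn
    have hconj : g * n * g⁻¹ ∈ N := Subgroup.Normal.conj_mem ‹N.Normal› n hn g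
    have key : φ σ g * n * (φ σ g)⁻¹ = g * n * g⁻¹ := by
      have := htriv σ _ hconj
      rwa [map_mul, map_mul, map_inv, htriv σ n hn] at this
    have h2 : (g⁻¹ * φ σ g) * n * (g⁻¹ * φ σ g)⁻¹ = n := by
      rw [mul_inv_rev, show g⁻¹ * φ σ g * n * ((φ σ g)⁻¹ * g⁻¹⁻¹)
        = g⁻¹ * (φ σ g * n * (φ σ g)⁻¹) * g by group, key]
      group
    calc n * (g⁻¹ * φ σ g)
        = ((g⁻¹ * φ σ g) * n * (g⁻¹ * φ σ g)⁻¹) * (g⁻¹ * φ σ g) := by rw [h2]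
      _ = (g⁻¹ * φ σ g) * n := by group
  rw [hadm, top_le_iff] at hsub
  intro g n hn
  have : g ∈ Subgroup.centralizer (N : Set G) := hsub ▸ Subgroup.mem_top g
  have := Subgroup.mem_centralizer_iff.mp this n hn
  rw [← this]
  group
end

section
/- Let G, H, Γ be finite groups with a given action of Γ on H by automorphisms. There is a bijection between the set of surjective group homomorphisms ψ : G → H⋊Γ and the set of quadruples (ρ, N, s, φ) where: ρ : G → Γ is a surjective homomorphism; N is a normal subgroup of G contained in ker ρ; s : Γ → G/N is a group homomorphism with ρ̄ ∘ s = id_Γ, where ρ̄ : G/N → Γ is the map induced by ρ; and φ : (ker ρ)/N → H is a Γ-equivariant group isomorphism, where Γ acts on (ker ρ)/N by γ·x = s(γ)·x·s(γ)⁻¹. The bijection sends ψ to (ρ, N, s, φ) where ρ is the composition of ψ with the projection H⋊Γ → Γ, N = ker ψ, s = ψ̄⁻¹ restricted to Γ ⊆ H⋊Γ (ψ̄ : G/N ≅ H⋊Γ being the isomorphism induced by ψ), and φ is the restriction of ψ̄ to (ker ρ)/N followed by the identification of ker(H⋊Γ → Γ) with H. -/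
open SemidirectProduct

/-- The data of a quadruple `(ρ, N, s, φiso)` attached to a fixed normal subgroup
`N ≤ G`: a surjection `ρ : G → Γ` with `N ≤ ker ρ`, a homomorphic section
`s : Γ → G/N` of the map `G/N → Γ` induced by `ρ`, and a Γ-equivariant
isomorphism `φiso : (ker ρ)/N ≅ H` (where `(ker ρ)/N` is viewed inside `G/N`
and `Γ` acts on it by conjugation through `s`). -/
structure SurjQuad (G H Γ : Type*) [Group G] [Group H] [Group Γ]
    (φ : Γ →* MulAut H) (N : Subgroup G) [N.Normal] where
  /-- the surjection onto `Γ` -/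
  ρ : G →* Γ
  ρ_surj : Function.Surjective ρ
  N_le : N ≤ ρ.ker
  /-- a homomorphic section `Γ → G/N` -/
  s : Γ →* G ⧸ N
  /-- `s` is a section of the map `G/N → Γ` induced by `ρ` -/
  s_sec : ∀ (γ : Γ) (g : G), (QuotientGroup.mk g : G ⧸ N) = s γ → ρ g = γ
  /-- a Γ-equivariant isomorphism `(ker ρ)/N ≅ H`, where `(ker ρ)/N` is the image
  of `ker ρ` in `G/N` -/
  φiso : (ρ.ker.map (QuotientGroup.mk' N)) ≃* H
  /-- Γ-equivariance of `φiso`, where `γ` acts on `(ker ρ)/N` by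
  `x ↦ s(γ)·x·s(γ)⁻¹` -/
  φiso_equiv : ∀ (γ : Γ) (x : ρ.ker.map (QuotientGroup.mk' N))
      (h : s γ * (x : G ⧸ N) * (s γ)⁻¹ ∈ ρ.ker.map (QuotientGroup.mk' N)),
      φiso ⟨s γ * (x : G ⧸ N) * (s γ)⁻¹, h⟩ = φ γ (φiso x)

/-!
A quadruple `(ρ, N, s, φiso)` gives back a map `G → H ⋊ Γ`: split `⟦g⟧ ∈ G/N` as
`(⟦g⟧ · s(ρ g)⁻¹) · s(ρ g)`, whose first factor lies in `(ker ρ)/N`, and send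
`g ↦ (φiso (⟦g⟧ · s(ρ g)⁻¹), ρ g)`. Γ-equivariance of `φiso` is exactly what makes this a
homomorphism. It is onto with kernel `N`, and it sends `g` to `inr γ` iff `⟦g⟧ = s γ`, so `ρ`, `s`
and `φiso` can be read off from it: the construction is injective. It is surjective because the
quadruple attached to `ψ` through `G / ker ψ ≃* H ⋊ Γ` is sent back to `ψ`. The bijection of the
theorem is the inverse of this construction.
-/

open QuotientGroup

namespace SurjQuad

section ToHom

variable {G H Γ : Type*} [Group G] [Group H] [Group Γ] {φ : Γ →* MulAut H}
  {N : Subgroup G} [N.Normal] (q : SurjQuad G H Γ φ N)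

abbrev kerQuot : Subgroup (G ⧸ N) := q.ρ.ker.map (mk' N)

instance : q.kerQuot.Normal := Subgroup.Normal.map inferInstance _ (mk'_surjective N)

lemma ρ_eq_one_of_mk_mem {g : G} (h : (g : G ⧸ N) ∈ q.kerQuot) : q.ρ g = 1 := by
  obtain ⟨k, hk, hkg⟩ := Subgroup.mem_map.1 h
  obtain ⟨n, hn, rfl⟩ := (mk'_eq_mk' N).1 hkg
  rw [map_mul, MonoidHom.mem_ker.1 hk, one_mul]
  exact q.N_le hn

lemma mk_mul_inv_s_mem (g : G) : (g : G ⧸ N) * (q.s (q.ρ g))⁻¹ ∈ q.kerQuot := by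
  obtain ⟨g', hg'⟩ := mk'_surjective N (q.s (q.ρ g))
  have hρ : q.ρ g' = q.ρ g := q.s_sec _ _ hg'
  refine Subgroup.mem_map.2 ⟨g * g'⁻¹, by simp [hρ], ?_⟩
  rw [← hg']
  simp

def kerPart (g : G) : q.kerQuot := ⟨g * (q.s (q.ρ g))⁻¹, q.mk_mul_inv_s_mem g⟩

lemma kerPart_mul (g₁ g₂ : G) :
    q.kerPart (g₁ * g₂) = q.kerPart g₁ *
      ⟨q.s (q.ρ g₁) * q.kerPart g₂ * (q.s (q.ρ g₁))⁻¹,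
        Subgroup.Normal.conj_mem inferInstance _ (q.kerPart g₂).2 _⟩ := by
  apply Subtype.ext
  simp only [kerPart, Subgroup.coe_mul, map_mul, mk_mul]
  group

lemma kerPart_eq_one_iff (g : G) : q.kerPart g = 1 ↔ (g : G ⧸ N) = q.s (q.ρ g) := by
  rw [← Subtype.val_inj]
  exact mul_inv_eq_one

lemma kerPart_of_mk_mem {g : G} (h : (g : G ⧸ N) ∈ q.kerQuot) : q.kerPart g = ⟨g, h⟩ := by
  apply Subtype.ext
  simp [kerPart, q.ρ_eq_one_of_mk_mem h]

def toHom : G →* H ⋊[φ] Γ where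
  toFun g := ⟨q.φiso (q.kerPart g), q.ρ g⟩
  map_one' := by
    have : q.kerPart 1 = 1 := (q.kerPart_eq_one_iff 1).2 (by simp)
    ext <;> simp [this]
  map_mul' g₁ g₂ := by
    ext
    · simp only [mul_left, kerPart_mul, map_mul, φiso_equiv]
    · simp

lemma toHom_left (g : G) : (q.toHom g).left = q.φiso (q.kerPart g) := rfl

lemma toHom_eq_inr_iff (g : G) (γ : Γ) : q.toHom g = inr γ ↔ (g : G ⧸ N) = q.s γ := by
  constructor
  · intro h
    have hρ : q.ρ g = γ := congrArg right h
    have hk : q.kerPart g = 1 := q.φiso.map_eq_one_iff.1 (congrArg left h)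
    rwa [kerPart_eq_one_iff, hρ] at hk
  · intro h
    have hρ : q.ρ g = γ := q.s_sec _ _ h
    have hk : q.kerPart g = 1 := (q.kerPart_eq_one_iff g).2 (hρ ▸ h)
    ext
    · simp [toHom_left, hk]
    · exact hρ

lemma ker_toHom : q.toHom.ker = N := by
  ext g
  rw [MonoidHom.mem_ker, ← inr.map_one, toHom_eq_inr_iff, map_one, eq_one_iff]

lemma toHom_surjective : Function.Surjective q.toHom := by
  rintro ⟨h, γ⟩
  obtain ⟨k, hk, hkx⟩ := Subgroup.mem_map.1 (q.φiso.symm h).2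
  obtain ⟨g, hg⟩ := mk'_surjective N (q.s γ)
  have hρ : q.ρ (k * g) = γ := by
    rw [map_mul, MonoidHom.mem_ker.1 hk, one_mul, q.s_sec _ _ hg]
  refine ⟨k * g, SemidirectProduct.ext ?_ hρ⟩
  show q.φiso _ = h
  rw [← MulEquiv.eq_symm_apply, ← Subtype.val_inj, ← hkx]
  simp [kerPart, hρ, ← hg]

lemma φiso_mk_eq_toHom_left (g : G) (h : (g : G ⧸ N) ∈ q.kerQuot) :
    q.φiso ⟨g, h⟩ = (q.toHom g).left := by
  rw [toHom_left, q.kerPart_of_mk_mem h]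

lemma rightHom_comp_toHom : rightHom.comp q.toHom = q.ρ := rfl

lemma eq_of_toHom_eq {q₁ q₂ : SurjQuad G H Γ φ N} (h : q₁.toHom = q₂.toHom) : q₁ = q₂ := by
  have hρ : q₁.ρ = q₂.ρ := by rw [← rightHom_comp_toHom, h, rightHom_comp_toHom]
  have hs : q₁.s = q₂.s := by
    ext γ
    obtain ⟨g, hg⟩ := mk'_surjective N (q₁.s γ)
    rw [← hg]
    exact (q₂.toHom_eq_inr_iff g γ).1 (h ▸ (q₁.toHom_eq_inr_iff g γ).2 hg)
  have hφiso : ∀ (g : G) (h₁ : (g : G ⧸ N) ∈ q₁.kerQuot) (h₂ : (g : G ⧸ N) ∈ q₂.kerQuot),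
      q₁.φiso ⟨g, h₁⟩ = q₂.φiso ⟨g, h₂⟩ := by
    intro g h₁ h₂
    rw [φiso_mk_eq_toHom_left, φiso_mk_eq_toHom_left, h]
  obtain ⟨ρ, _, _, s, _, f₁, _⟩ := q₁
  obtain ⟨_, _, _, _, _, f₂, _⟩ := q₂
  obtain rfl := hρ
  obtain rfl := hs
  obtain rfl : f₁ = f₂ := by
    ext ⟨x, hx⟩
    obtain ⟨k, -, rfl⟩ := Subgroup.mem_map.1 hx
    exact hφiso k hx hx
  rfl

end ToHom

section OfSurjective

variable {G H Γ : Type*} [Group G] [Group H] [Group Γ] {φ : Γ →* MulAut H}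
  (ψ : G →* H ⋊[φ] Γ) (hψ : Function.Surjective ψ)

lemma map_kerQuot_eq_range_inl :
    ((rightHom.comp ψ).ker.map (mk' ψ.ker)).map
      (quotientKerEquivOfSurjective ψ hψ : G ⧸ ψ.ker →* H ⋊[φ] Γ) = inl.range := by
  rw [Subgroup.map_map, show (quotientKerEquivOfSurjective ψ hψ : G ⧸ ψ.ker →* H ⋊[φ] Γ).comp
    (mk' ψ.ker) = ψ from rfl, ← MonoidHom.comap_ker, Subgroup.map_comap_eq_self_of_surjective hψ,
    range_inl_eq_ker_rightHom]

noncomputable def kerQuotEquivOfSurjective : (rightHom.comp ψ).ker.map (mk' ψ.ker) ≃* H :=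
  ((quotientKerEquivOfSurjective ψ hψ).subgroupMap _).trans <|
    (MulEquiv.subgroupCongr (map_kerQuot_eq_range_inl ψ hψ)).trans
      (MonoidHom.ofInjective inl_injective).symm

lemma inl_kerQuotEquivOfSurjective (x : (rightHom.comp ψ).ker.map (mk' ψ.ker)) :
    inl (kerQuotEquivOfSurjective ψ hψ x) = quotientKerEquivOfSurjective ψ hψ x :=
  MonoidHom.apply_ofInjective_symm inl_injective _

noncomputable def sectionOfSurjective : Γ →* G ⧸ ψ.ker :=
  ((quotientKerEquivOfSurjective ψ hψ).symm : H ⋊[φ] Γ →* G ⧸ ψ.ker).comp inr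

lemma quotientKerEquivOfSurjective_sectionOfSurjective (γ : Γ) :
    quotientKerEquivOfSurjective ψ hψ (sectionOfSurjective ψ hψ γ) = inr γ :=
  MulEquiv.apply_symm_apply _ _

noncomputable def ofSurjective : SurjQuad G H Γ φ ψ.ker where
  ρ := rightHom.comp ψ
  ρ_surj := rightHom_surjective.comp hψ
  N_le g (hg : ψ g = 1) := show rightHom (ψ g) = 1 by rw [hg, map_one]
  s := sectionOfSurjective ψ hψ
  s_sec γ g h := by
    have hg : ψ g = inr γ := by
      rw [← quotientKerEquivOfSurjective_sectionOfSurjective ψ hψ, ← h]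
      rfl
    show rightHom (ψ g) = γ
    rw [hg, rightHom_inr]
  φiso := kerQuotEquivOfSurjective ψ hψ
  φiso_equiv γ x h := by
    apply inl_injective (φ := φ)
    simp only [inl_kerQuotEquivOfSurjective, inl_aut, map_mul, map_inv,
      quotientKerEquivOfSurjective_sectionOfSurjective]

lemma toHom_ofSurjective : (ofSurjective ψ hψ).toHom = ψ := by
  ext g
  · apply inl_injective (φ := φ)
    refine (inl_kerQuotEquivOfSurjective ψ hψ ((ofSurjective ψ hψ).kerPart g)).trans ?_
    rw [kerPart, map_mul, map_inv, mul_inv_eq_iff_eq_mul]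
    change ψ g = inl (ψ g).left *
      quotientKerEquivOfSurjective ψ hψ (sectionOfSurjective ψ hψ (ψ g).right)
    rw [quotientKerEquivOfSurjective_sectionOfSurjective, inl_left_mul_inr_right]
  · rfl

end OfSurjective

variable (G H Γ : Type*) [Group G] [Group H] [Group Γ] (φ : Γ →* MulAut H) in
def sigmaToSurjHom : (Σ' (N : Subgroup G) (_ : N.Normal), SurjQuad G H Γ φ N) →
    {ψ : G →* H ⋊[φ] Γ // Function.Surjective ψ} :=
  fun ⟨_, _, q⟩ => ⟨q.toHom, q.toHom_surjective⟩

lemma sigmaToSurjHom_bijective {G H Γ : Type*} [Group G] [Group H] [Group Γ]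
    (φ : Γ →* MulAut H) : Function.Bijective (sigmaToSurjHom G H Γ φ) := by
  refine ⟨?_, fun ψ => ⟨⟨_, _, ofSurjective ψ.1 ψ.2⟩, Subtype.ext (toHom_ofSurjective ψ.1 ψ.2)⟩⟩
  rintro ⟨N₁, _, q₁⟩ ⟨N₂, _, q₂⟩ h
  have h' : q₁.toHom = q₂.toHom := congrArg Subtype.val h
  obtain rfl : N₁ = N₂ := by rw [← q₁.ker_toHom, ← q₂.ker_toHom, h']
  rw [eq_of_toHom_eq h']

end SurjQuad

theorem stmt_9_general {G H Γ : Type*} [Group G] [Group H] [Group Γ]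
    (φ : Γ →* MulAut H) :
    ∃ F : {ψ : G →* H ⋊[φ] Γ // Function.Surjective ψ} ≃
        (Σ' (N : Subgroup G) (hN : N.Normal), @SurjQuad G H Γ _ _ _ φ N hN),
      ∀ ψ : {ψ : G →* H ⋊[φ] Γ // Function.Surjective ψ},
        haveI : ((F ψ).1).Normal := (F ψ).2.1
        (F ψ).1 = (ψ : G →* H ⋊[φ] Γ).ker ∧
        (F ψ).2.2.ρ = (rightHom : H ⋊[φ] Γ →* Γ).comp ψ.1 ∧
        (∀ (γ : Γ) (g : G), ψ.1 g = inr γ →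
          (F ψ).2.2.s γ = (QuotientGroup.mk g : G ⧸ (F ψ).1)) ∧
        (∀ (g : G) (h : (QuotientGroup.mk g : G ⧸ (F ψ).1) ∈
            ((F ψ).2.2.ρ.ker.map (@QuotientGroup.mk' G _ (F ψ).1 (F ψ).2.1))),
          (F ψ).2.2.φiso ⟨QuotientGroup.mk g, h⟩ = (ψ.1 g).left) := by
  let B := Equiv.ofBijective _ (SurjQuad.sigmaToSurjHom_bijective (G := G) φ)
  refine ⟨B.symm, fun ψ => ?_⟩
  have hψ : (B (B.symm ψ)).1 = ψ.1 := congrArg Subtype.val (B.apply_symm_apply ψ)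
  generalize B.symm ψ = Q at hψ ⊢
  obtain ⟨N, _, q⟩ := Q
  change q.toHom = ψ.1 at hψ
  rw [← hψ]
  exact ⟨q.ker_toHom.symm, q.rightHom_comp_toHom.symm,
    fun γ g hg => ((q.toHom_eq_inr_iff g γ).1 hg).symm, q.φiso_mk_eq_toHom_left⟩

/-- For finite groups `G`, `H`, `Γ` with a Γ-action on `H`, there is a bijection
between surjections `ψ : G → H ⋊ Γ` and quadruples `(ρ, N, s, φiso)` as above
(with `N` ranging over normal subgroups of `G`); the bijection sends `ψ` to the
quadruple with `N = ker ψ`, `ρ` the composition of `ψ` with the projection to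
`Γ`, `s` determined by `s γ = ⟦g⟧` whenever `ψ g = (1,γ)`, and `φiso`
determined by `φiso ⟦g⟧ = (ψ g).left` for `g` with `⟦g⟧ ∈ (ker ρ)/N`. -/
theorem stmt_9 {G H Γ : Type*} [Group G] [Group H] [Group Γ]
    [Finite G] [Finite H] [Finite Γ] (φ : Γ →* MulAut H) :
    ∃ F : {ψ : G →* H ⋊[φ] Γ // Function.Surjective ψ} ≃
        (Σ' (N : Subgroup G) (hN : N.Normal), @SurjQuad G H Γ _ _ _ φ N hN),
      ∀ ψ : {ψ : G →* H ⋊[φ] Γ // Function.Surjective ψ},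
        haveI : ((F ψ).1).Normal := (F ψ).2.1
        (F ψ).1 = (ψ : G →* H ⋊[φ] Γ).ker ∧
        (F ψ).2.2.ρ = (rightHom : H ⋊[φ] Γ →* Γ).comp ψ.1 ∧
        (∀ (γ : Γ) (g : G), ψ.1 g = inr γ →
          (F ψ).2.2.s γ = (QuotientGroup.mk g : G ⧸ (F ψ).1)) ∧
        (∀ (g : G) (h : (QuotientGroup.mk g : G ⧸ (F ψ).1) ∈
            ((F ψ).2.2.ρ.ker.map (@QuotientGroup.mk' G _ (F ψ).1 (F ψ).2.1))),
          (F ψ).2.2.φiso ⟨QuotientGroup.mk g, h⟩ = (ψ.1 g).left) :=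
  stmt_9_general φ
end

section
/- Let Γ be a finite group acting by automorphisms on a finite group H with gcd(|H|,|Γ|) = 1, and let π : H⋊Γ → Γ be the canonical projection. For an element x = (h,γ) ∈ H⋊Γ, the order of x equals the order of its image γ = π(x) if and only if h = g⁻¹·γ(g) for some g ∈ H; equivalently, the order of x equals the order of π(x) if and only if x is conjugate to (1,γ) by an element of H. -/
open SemidirectProduct Finset

section Aux

private lemma orderOf_conj_aux {G : Type*} [Group G] (a b : G) :
    orderOf (a * b * a⁻¹) = orderOf b := by
  have := orderOf_injective (MulAut.conj a).toMonoidHom (MulAut.conj a).injective b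
  simpa [MulAut.conj_apply] using this

variable {H Γ : Type*} [Group H] [Group Γ] [Finite H] [Finite Γ] (φ : Γ →* MulAut H)

private lemma sdp_conj_iff (g h : H) (γ : Γ) :
    inl g * (inl h * inr γ) * (inl g)⁻¹ = (inr γ : H ⋊[φ] Γ) ↔ h = g⁻¹ * φ γ g := by
  rw [SemidirectProduct.ext_iff]
  simp [mul_assoc]
  constructor
  · intro e
    have h1 : h * ((φ γ) g)⁻¹ = g⁻¹ := eq_inv_of_mul_eq_one_right e
    rw [← h1]; group
  · intro e
    rw [e]; group

instance : Finite (H ⋊[φ] Γ) :=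
  Finite.of_injective (fun x : H ⋊[φ] Γ => (x.left, x.right))
    (fun a b hab =>
      SemidirectProduct.ext (congrArg Prod.fst hab) (congrArg Prod.snd hab))

/-- The hard direction: if an element of the coset over `γ` has order
`orderOf γ`, it is `H`-conjugate to `inr γ`. -/
private lemma sdp_conj_of_orderOf_eq
    (hco : Nat.Coprime (Nat.card H) (Nat.card Γ)) (γ : Γ) (x : H ⋊[φ] Γ)
    (hx : rightHom x = γ) (hord : orderOf x = orderOf γ) :
    ∃ g : H, inl g * x * (inl g)⁻¹ = (inr γ : H ⋊[φ] Γ) := by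
  classical
  haveI : Fintype (H ⋊[φ] Γ) := Fintype.ofFinite _
  haveI : Fintype H := Fintype.ofFinite _
  set n := orderOf γ with hn
  have hnpos : 0 < n := orderOf_pos γ
  have hcoHn : (Nat.card H).Coprime n :=
    Nat.Coprime.coprime_dvd_right (orderOf_dvd_natCard γ) hco
  -- orders of kernel elements divide |H|
  have hker : ∀ w : H ⋊[φ] Γ, rightHom w = 1 → orderOf w ∣ Nat.card H := by
    intro w hw
    have hwmem : w ∈ (inl : H →* H ⋊[φ] Γ).range := by
      rw [range_inl_eq_ker_rightHom]; exact hw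
    obtain ⟨u, rfl⟩ := hwmem
    rw [orderOf_injective inl inl_injective]
    exact orderOf_dvd_natCard u
  -- the "n-part" map
  set ν : (H ⋊[φ] Γ) → (H ⋊[φ] Γ) := fun y => y ^ (orderOf (y ^ n) ^ n.totient)
    with hνdef
  have hP : ∀ y : H ⋊[φ] Γ, rightHom y = γ →
      rightHom (ν y) = γ ∧ orderOf (ν y) = n ∧
      rightHom ((ν y)⁻¹ * y) = 1 ∧ Commute (ν y) ((ν y)⁻¹ * y) := by
    intro y hy
    set m := orderOf (y ^ n) with hm
    have hyn1 : rightHom (y ^ n) = 1 := by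
      rw [map_pow, hy, hn]; exact pow_orderOf_eq_one γ
    have hmH : m ∣ Nat.card H := hker _ hyn1
    have hmn : m.Coprime n := Nat.Coprime.coprime_dvd_left hmH hcoHn
    have hk1 : m ^ n.totient ≡ 1 [MOD n] := Nat.ModEq.pow_totient hmn
    have hrν : rightHom (ν y) = γ := by
      show rightHom (y ^ (m ^ n.totient)) = γ
      rw [map_pow, hy]
      calc γ ^ m ^ n.totient = γ ^ 1 := by
            rw [pow_eq_pow_iff_modEq]; exact hk1
        _ = γ := pow_one γ
    have hνn : (ν y) ^ n = 1 := by
      show (y ^ m ^ n.totient) ^ n = 1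
      rw [← pow_mul]
      apply orderOf_dvd_iff_pow_eq_one.mp
      have h1 : orderOf y ∣ n * m := by
        apply orderOf_dvd_of_pow_eq_one
        rw [pow_mul]
        exact pow_orderOf_eq_one (y ^ n)
      have h2 : n * m ∣ m ^ n.totient * n := by
        rw [mul_comm n m]
        exact Nat.mul_dvd_mul
          (dvd_pow_self m (Nat.totient_pos.mpr hnpos).ne') dvd_rfl
      exact h1.trans h2
    have hνord : orderOf (ν y) = n := by
      apply Nat.dvd_antisymm (orderOf_dvd_of_pow_eq_one hνn)
      have := orderOf_map_dvd (rightHom : H ⋊[φ] Γ →* Γ) (ν y)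
      rwa [hrν] at this
    have hw1 : rightHom ((ν y)⁻¹ * y) = 1 := by
      rw [map_mul, map_inv, hrν, hy, inv_mul_cancel]
    have hcom : Commute (ν y) ((ν y)⁻¹ * y) := by
      have h0 : Commute (ν y) y := (Commute.refl y).pow_left _
      exact Commute.mul_right (Commute.refl _).inv_right h0
    exact ⟨hrν, hνord, hw1, hcom⟩
  have hU : ∀ y z : H ⋊[φ] Γ, rightHom y = γ → rightHom z = γ → orderOf z = n →
      rightHom (z⁻¹ * y) = 1 → Commute z (z⁻¹ * y) → ν y = z := by
    intro y z hy hz hzn hw hc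
    set w := z⁻¹ * y with hwdef
    have hyzw : y = z * w := by rw [hwdef]; group
    have hmwH : orderOf w ∣ Nat.card H := hker _ hw
    have hmwn : (orderOf w).Coprime n := Nat.Coprime.coprime_dvd_left hmwH hcoHn
    have hyn : y ^ n = w ^ n := by
      rw [hyzw, hc.mul_pow, ← hzn, pow_orderOf_eq_one, one_mul]
    have hmeq : orderOf (y ^ n) = orderOf w := by
      rw [hyn]; exact Nat.Coprime.orderOf_pow hmwn
    show y ^ orderOf (y ^ n) ^ n.totient = z
    rw [hmeq, hyzw, hc.mul_pow]
    have hz1 : z ^ orderOf w ^ n.totient = z := by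
      calc z ^ orderOf w ^ n.totient = z ^ 1 := by
            rw [pow_eq_pow_iff_modEq, hzn]
            exact Nat.ModEq.pow_totient hmwn
        _ = z := pow_one z
    have hww : w ^ orderOf w ^ n.totient = 1 := by
      apply orderOf_dvd_iff_pow_eq_one.mp
      exact dvd_pow_self _ (Nat.totient_pos.mpr hnpos).ne'
    rw [hz1, hww, mul_one]
  -- the two maps whose fibers we count
  set f : H → H ⋊[φ] Γ := fun g => inl g * inr γ * (inl g)⁻¹ with hfdef
  set F : H → H ⋊[φ] Γ := fun a => ν (inl a * inr γ) with hFdef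
  have hry : ∀ a : H, rightHom (inl a * inr γ : H ⋊[φ] Γ) = γ := by
    intro a; rw [map_mul, rightHom_inl, rightHom_inr, one_mul]
  set Cn : Finset (H ⋊[φ] Γ) :=
    univ.filter (fun z => rightHom z = γ ∧ orderOf z = n) with hCn
  set S : (H ⋊[φ] Γ) → Finset (H ⋊[φ] Γ) :=
    fun z => univ.filter (fun w => rightHom w = 1 ∧ Commute z w) with hS
  have hFord : ∀ a : H, F a ∈ Cn := by
    intro a
    obtain ⟨h1, h2, _, _⟩ := hP (inl a * inr γ) (hry a)
    exact mem_filter.mpr ⟨mem_univ _, h1, h2⟩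
  have hford : ∀ g : H, f g ∈ Cn := by
    intro g
    refine mem_filter.mpr ⟨mem_univ _, ?_, ?_⟩
    · show rightHom (inl g * inr γ * (inl g)⁻¹) = γ
      rw [map_mul, map_mul, map_inv, rightHom_inl, rightHom_inr]
      group
    · show orderOf (inl g * inr γ * (inl g)⁻¹) = n
      rw [orderOf_conj_aux, orderOf_injective inr inr_injective]
  -- fibers of F over Cn match S
  have hfib_F : ∀ z ∈ Cn, (univ.filter fun a => F a = z).card = (S z).card := by
    intro z hz
    obtain ⟨-, hzr, hzn⟩ := mem_filter.mp hz
    apply Finset.card_bij (fun a _ => z⁻¹ * (inl a * inr γ))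
    · intro a ha
      have hFa : F a = z := (mem_filter.mp ha).2
      obtain ⟨-, -, hw, hcm⟩ := hP (inl a * inr γ) (hry a)
      rw [show ν (inl a * inr γ) = z from hFa] at hw hcm
      exact mem_filter.mpr ⟨mem_univ _, hw, hcm⟩
    · intro a1 _ a2 _ he
      have : (inl a1 : H ⋊[φ] Γ) = inl a2 := by
        have h2 := mul_left_cancel he
        exact mul_right_cancel h2
      exact inl_injective this
    · intro w hw
      obtain ⟨-, hw1, hwc⟩ := mem_filter.mp hw
      set y := z * w with hy
      have hyr : rightHom y = γ := by rw [hy, map_mul, hzr, hw1, mul_one]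
      have hyright : y.right = γ := by
        have : rightHom y = y.right := rfl
        rw [← this, hyr]
      have hy' : inl y.left * inr γ = y := by
        conv_rhs => rw [← inl_left_mul_inr_right y]
        rw [hyright]
      have hzw : z⁻¹ * y = w := by rw [hy]; group
      refine ⟨y.left, ?_, ?_⟩
      · refine mem_filter.mpr ⟨mem_univ _, ?_⟩
        show ν (inl y.left * inr γ) = z
        rw [hy']
        apply hU y z hyr hzr hzn
        · rw [hzw]; exact hw1
        · rw [hzw]; exact hwc
      · rw [hy', hzw]
  -- fibers of f over its image match S
  have hfib_f : ∀ z ∈ univ.image f,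
      (univ.filter fun g => f g = z).card = (S z).card := by
    intro z hz
    obtain ⟨g0, -, hg0⟩ := mem_image.mp hz
    have hg0' : inl g0 * inr γ * (inl g0)⁻¹ = z := hg0
    apply Finset.card_bij (fun g _ => (inl (g * g0⁻¹) : H ⋊[φ] Γ))
    · intro g hg
      have hgz : inl g * inr γ * (inl g)⁻¹ = z := (mem_filter.mp hg).2
      refine mem_filter.mpr ⟨mem_univ _, rightHom_inl _, ?_⟩
      have e1 : (inl (g * g0⁻¹) : H ⋊[φ] Γ) = inl g * (inl g0)⁻¹ := by
        rw [map_mul, map_inv]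
      have L : (inl g * (inl g0)⁻¹) * z = inl g * inr γ * (inl g0)⁻¹ := by
        rw [← hg0']; group
      have R : z * (inl g * (inl g0)⁻¹) = inl g * inr γ * (inl g0)⁻¹ := by
        rw [← hgz]; group
      rw [e1]
      exact R.trans L.symm
    · intro g1 _ g2 _ he
      have := inl_injective he
      exact mul_right_cancel this
    · intro w hw
      obtain ⟨-, hw1, hwc⟩ := mem_filter.mp hw
      have hwmem : w ∈ (inl : H →* H ⋊[φ] Γ).range := by
        rw [range_inl_eq_ker_rightHom]; exact hw1
      obtain ⟨u, rfl⟩ := hwmem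
      refine ⟨u * g0, ?_, ?_⟩
      · refine mem_filter.mpr ⟨mem_univ _, ?_⟩
        have e1 : f (u * g0) = inl u * z * (inl u)⁻¹ := by
          show inl (u * g0) * inr γ * (inl (u * g0))⁻¹ = _
          rw [map_mul, ← hg0']
          group
        have e2 : inl u * z = z * inl u := hwc.symm
        rw [e1, e2, mul_inv_cancel_right]
      · rw [mul_assoc, mul_inv_cancel, mul_one]
  -- counting
  have card1 : (univ : Finset H).card = ∑ z ∈ Cn, (S z).card := by
    rw [Finset.card_eq_sum_card_fiberwise (f := F) (t := Cn) (fun a _ => hFord a)]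
    exact Finset.sum_congr rfl hfib_F
  have card2 : (univ : Finset H).card = ∑ z ∈ univ.image f, (S z).card := by
    rw [Finset.card_eq_sum_card_fiberwise (f := f) (t := univ.image f)
      (fun g _ => mem_image_of_mem f (mem_univ g))]
    exact Finset.sum_congr rfl hfib_f
  have hsub : univ.image f ⊆ Cn := by
    intro z hz
    obtain ⟨g, -, rfl⟩ := mem_image.mp hz
    exact hford g
  have hxC : x ∈ Cn := mem_filter.mpr ⟨mem_univ _, hx, hord⟩
  have hxO : x ∈ univ.image f := by
    by_contra hxO
    have hlt : ∑ z ∈ univ.image f, (S z).card < ∑ z ∈ Cn, (S z).card := by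
      apply Finset.sum_lt_sum_of_subset hsub hxC hxO
      · apply Finset.card_pos.mpr
        exact ⟨1, mem_filter.mpr ⟨mem_univ _, map_one _, Commute.one_right _⟩⟩
      · exact fun j _ _ => Nat.zero_le _
    omega
  obtain ⟨g, -, hg⟩ := mem_image.mp hxO
  refine ⟨g⁻¹, ?_⟩
  have hg' : inl g * inr γ * (inl g)⁻¹ = x := hg
  rw [← hg', map_inv]
  group

end Aux

/-- Let `Γ` act on a finite group `H` with `gcd(|H|,|Γ|) = 1`.  An element
`(h,γ)` of `H ⋊ Γ` has the same order as its image `γ` under the projection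
iff `h = g⁻¹·γ(g)` for some `g ∈ H`, equivalently iff `(h,γ)` is conjugate to
`(1,γ)` by an element of `H`. -/
theorem stmt_14 {H Γ : Type*} [Group H] [Group Γ] [Finite H] [Finite Γ]
    (φ : Γ →* MulAut H)
    (hco : Nat.Coprime (Nat.card H) (Nat.card Γ))
    (h : H) (γ : Γ) :
    (orderOf (inl h * inr γ : H ⋊[φ] Γ) = orderOf γ ↔
      ∃ g : H, h = g⁻¹ * φ γ g) ∧
    (orderOf (inl h * inr γ : H ⋊[φ] Γ) = orderOf γ ↔
      ∃ g : H, inl g * (inl h * inr γ) * (inl g)⁻¹ = (inr γ : H ⋊[φ] Γ)) := by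
  have hx : rightHom (inl h * inr γ : H ⋊[φ] Γ) = γ := by
    rw [map_mul, rightHom_inl, rightHom_inr, one_mul]
  have key2 : orderOf (inl h * inr γ : H ⋊[φ] Γ) = orderOf γ ↔
      ∃ g : H, inl g * (inl h * inr γ) * (inl g)⁻¹ = (inr γ : H ⋊[φ] Γ) := by
    constructor
    · intro hord
      exact sdp_conj_of_orderOf_eq φ hco γ _ hx hord
    · rintro ⟨g, hg⟩
      have he : (inl h * inr γ : H ⋊[φ] Γ) = (inl g)⁻¹ * inr γ * inl g := by
        rw [← hg]
        simp only [mul_assoc, inv_mul_cancel_left]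
        simpa [mul_assoc] using hg
      rw [he]
      have : ((inl g : H ⋊[φ] Γ))⁻¹ * inr γ * inl g
          = (inl g)⁻¹ * inr γ * ((inl g)⁻¹)⁻¹ := by group
      rw [this, orderOf_conj_aux, orderOf_injective inr inr_injective]
  constructor
  · rw [key2]
    exact exists_congr fun g => sdp_conj_iff φ g h γ
  · exact key2
end

section
/- Let Γ be a finite group and H a finite admissible Γ-group, and let π : H⋊Γ → Γ be the canonical projection. Let c be the set of nonidentity elements x ∈ H⋊Γ whose order equals the order of π(x). Then c generates the group H⋊Γ. -/
open SemidirectProduct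

/-- Let `Γ` be a finite group and `H` a finite admissible Γ-group (i.e.
`gcd(|H|,|Γ|) = 1` and `H` is generated by `{h⁻¹σ(h)}`).  Then the set `c` of
nonidentity elements of `H ⋊ Γ` whose order equals the order of their image in
`Γ` generates `H ⋊ Γ`. -/
theorem stmt_15 {H Γ : Type*} [Group H] [Group Γ] [Finite H] [Finite Γ]
    (φ : Γ →* MulAut H)
    (hco : Nat.Coprime (Nat.card H) (Nat.card Γ))
    (hadm : Subgroup.closure {x : H | ∃ (g : H) (σ : Γ), x = g⁻¹ * φ σ g} = ⊤) :
    Subgroup.closure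
      {x : H ⋊[φ] Γ | x ≠ 1 ∧ orderOf x = orderOf (rightHom x)} = ⊤ := by
  set c : Set (H ⋊[φ] Γ) :=
    {x : H ⋊[φ] Γ | x ≠ 1 ∧ orderOf x = orderOf (rightHom x)} with hc
  have hinr : ∀ σ : Γ, (inr σ : H ⋊[φ] Γ) ∈ Subgroup.closure c := by
    intro σ
    rcases eq_or_ne σ 1 with h1 | h1
    · simpa [h1] using one_mem _
    · apply Subgroup.subset_closure
      refine ⟨?_, ?_⟩
      · simpa using fun h => h1 (inr_injective (by simpa using h))
      · rw [rightHom_inr, orderOf_injective (inr : Γ →* H ⋊[φ] Γ) inr_injective]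
  have hconj : ∀ (g : H) (σ : Γ),
      (inl (g⁻¹ * φ σ g) : H ⋊[φ] Γ) ∈ Subgroup.closure c := by
    intro g σ
    rcases eq_or_ne σ 1 with h1 | h1
    · simpa [h1] using one_mem _
    · have key : (inl (g⁻¹ * φ σ g) : H ⋊[φ] Γ)
          = (inl g⁻¹ * inr σ * inl g) * inr σ⁻¹ := by
        rw [map_mul, inl_aut]
        group
      rw [key]
      refine mul_mem ?_ (hinr σ⁻¹)
      apply Subgroup.subset_closure
      constructor
      · intro h
        exact h1 (by simpa using congrArg rightHom h)
      · have hr : rightHom (inl g⁻¹ * inr σ * inl g : H ⋊[φ] Γ) = σ := by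
          simp
        rw [hr]
        have : orderOf (inl g⁻¹ * inr σ * inl g : H ⋊[φ] Γ)
            = orderOf (inr σ : H ⋊[φ] Γ) := by
          have := orderOf_injective (MulAut.conj (inl g⁻¹ : H ⋊[φ] Γ)).toMonoidHom
            (MulEquiv.injective _) (inr σ)
          simpa [MulAut.conj, mul_assoc] using this
        rw [this, orderOf_injective (inr : Γ →* H ⋊[φ] Γ) inr_injective]
  have hinl : ∀ h : H, (inl h : H ⋊[φ] Γ) ∈ Subgroup.closure c := by
    intro h
    have hmem : h ∈ Subgroup.closure {x : H | ∃ (g : H) (σ : Γ), x = g⁻¹ * φ σ g} := by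
      rw [hadm]; trivial
    induction hmem using Subgroup.closure_induction with
    | mem x hx => obtain ⟨g, σ, rfl⟩ := hx; exact hconj g σ
    | one => simpa using one_mem _
    | mul x y _ _ hx hy => rw [map_mul]; exact mul_mem hx hy
    | inv x _ hx => rw [map_inv]; exact inv_mem hx
  rw [eq_top_iff]
  intro x _
  have : x = inl x.left * inr x.right := by
    ext <;> simp
  rw [this]
  exact mul_mem (hinl _) (hinr _)
end

section
/- Let Γ be a finite group and H a finite admissible Γ-group. Then the canonical projection H⋊Γ → Γ induces an isomorphism on abelianizations: the subgroup H is contained in the kernel of the abelianization map H⋊Γ → (H⋊Γ)^{ab}, and the induced map (H⋊Γ)^{ab} → Γ^{ab} is a group isomorphism. -/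
open SemidirectProduct

/-- Let `Γ` be a finite group and `H` a finite admissible Γ-group.  Then the
projection `H ⋊ Γ → Γ` induces an isomorphism on abelianizations: `H` lies in
the kernel of the abelianization map of `H ⋊ Γ`, and the induced map
`(H ⋊ Γ)^{ab} → Γ^{ab}` is an isomorphism. -/
theorem stmt_16 {H Γ : Type*} [Group H] [Group Γ] [Finite H] [Finite Γ]
    (φ : Γ →* MulAut H)
    (hco : Nat.Coprime (Nat.card H) (Nat.card Γ))
    (hadm : Subgroup.closure {x : H | ∃ (g : H) (σ : Γ), x = g⁻¹ * φ σ g} = ⊤) :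
    (∀ h : H, Abelianization.of (inl h : H ⋊[φ] Γ) = 1) ∧
    Function.Bijective (Abelianization.map (rightHom : H ⋊[φ] Γ →* Γ)) := by
  set f : H →* Abelianization (H ⋊[φ] Γ) :=
    (Abelianization.of).comp (inl : H →* H ⋊[φ] Γ) with hf
  have hker : Subgroup.closure {x : H | ∃ (g : H) (σ : Γ), x = g⁻¹ * φ σ g} ≤ f.ker := by
    rw [Subgroup.closure_le]
    rintro x ⟨g, σ, rfl⟩
    have : f (g⁻¹ * φ σ g) =
        (Abelianization.of (inl g : H ⋊[φ] Γ))⁻¹ *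
          Abelianization.of (inl (φ σ g) : H ⋊[φ] Γ) := by
      simp [hf]
    simp only [SetLike.mem_coe, MonoidHom.mem_ker, this, inl_aut, map_mul, map_inv]
    set a := Abelianization.of (inl g : H ⋊[φ] Γ)
    set b := Abelianization.of (inr σ : H ⋊[φ] Γ)
    rw [mul_comm b a, mul_assoc]
    simp
  have h1 : ∀ h : H, Abelianization.of (inl h : H ⋊[φ] Γ) = 1 := by
    intro h
    have : h ∈ f.ker := hker (by rw [hadm]; trivial)
    simpa [hf] using this
  refine ⟨h1, ?_⟩
  set F := Abelianization.map (rightHom : H ⋊[φ] Γ →* Γ) with hF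
  set G := Abelianization.map (inr : Γ →* H ⋊[φ] Γ) with hG
  have hGF : ∀ x, G (F x) = x := by
    intro x
    induction x using QuotientGroup.induction_on with
    | _ z =>
      show G (F (Abelianization.of z)) = Abelianization.of z
      have hz : (Abelianization.of z : Abelianization (H ⋊[φ] Γ)) =
          Abelianization.of (inr z.right : H ⋊[φ] Γ) := by
        conv_lhs => rw [← inl_left_mul_inr_right z]
        rw [map_mul, h1, one_mul]
      rw [hz, hF, hG, Abelianization.map_of, Abelianization.map_of, rightHom_inr]
  have hFG : ∀ y, F (G y) = y := by
    intro y
    induction y using QuotientGroup.induction_on with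
    | _ z =>
      show F (G (Abelianization.of z)) = Abelianization.of z
      rw [hF, hG, Abelianization.map_of, Abelianization.map_of, rightHom_inr]
  exact ⟨Function.LeftInverse.injective hGF, Function.RightInverse.surjective hFG⟩
end
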